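/- For all real numbers a, b with 0 < a < 1 and 0 < b < 1, one has ∫_{−π}^{π} |1 − a − e^{iω}| / |1 − b − e^{iω}|² dω = (2a²/(b²(1 − a/2))) · Π(α², k), where α² = (b²(1 − a) − a²(1 − b))/(b²(1 − a/2)²), k = √(1 − a)/(1 − a/2), and Π(α², k) = ∫_0^{π/2} dθ / ((1 − α² sin² θ)·√(1 − k² sin² θ)) is the complete elliptic integral of the third kind. -/

import Mathlib

open MeasureTheory Real

/-- The complete elliptic integral of the third kind,
`Π(α², k) = ∫ θ in [0, π/2], dθ / ((1 - α² sin² θ) √(1 - k² sin² θ))`. -/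
noncomputable def ellipticPi (alphaSq k : ℝ) : ℝ :=
  ∫ θ in Set.Icc 0 (π / 2),
    1 / ((1 - alphaSq * Real.sin θ ^ 2) * Real.sqrt (1 - k ^ 2 * Real.sin θ ^ 2))

/-!
Write `q_c(θ) = ‖1 - c - e^{2iθ}‖² = c² + 4(1 - c) sin² θ`. The substitution `ω = 2θ` and evenness
turn the left-hand side into `4 ∫₀^{π/2} √(q_a(θ)) / q_b(θ) dθ`. The substitution
`tan φ = (2 - a) / a · tan θ` maps `[0, π/2]` onto itself, with `sin φ = (2 - a) sin θ / √(q_a(θ))`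
and `dφ / dθ = a (2 - a) / q_a(θ)`; under it `1 - k² sin² φ = a² / q_a(θ)` and
`1 - α² sin² φ = a² q_b(θ) / (b² q_a(θ))`, so `Π(α², k)` becomes the same integral times
`(2 - a) b² / a²`.
-/

lemma Function.Even.intervalIntegral_eq_two_mul {f : ℝ → ℝ} (hf : Function.Even f)
    {c : ℝ} (hc : 0 ≤ c) (hfi : IntervalIntegrable f volume (-c) c) :
    ∫ x in -c..c, f x = 2 * ∫ x in 0..c, f x := by
  have hleft : ∫ x in -c..0, f x = ∫ x in 0..c, f x := by
    simpa [hf _] using (intervalIntegral.integral_comp_neg (a := 0) (b := c) f).symm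
  have h0 : (0 : ℝ) ∈ Set.uIcc (-c) c := Set.mem_uIcc.mpr (Or.inl ⟨by linarith, hc⟩)
  rw [← intervalIntegral.integral_add_adjacent_intervals
    (hfi.mono_set (Set.uIcc_subset_uIcc_left h0)) (hfi.mono_set (Set.uIcc_subset_uIcc_right h0)),
    hleft, two_mul]

lemma HasDerivAt.arctan_div {f g : ℝ → ℝ} {f' g' x : ℝ} (hf : HasDerivAt f f' x)
    (hg : HasDerivAt g g' x) (hgx : g x ≠ 0) :
    HasDerivAt (fun y => Real.arctan (f y / g y)) ((f' * g x - f x * g') / (g x ^ 2 + f x ^ 2)) x := by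
  refine ((hf.div hg hgx).arctan).congr_deriv ?_
  have : g x ^ 2 + f x ^ 2 ≠ 0 := by positivity
  rw [Pi.div_apply]
  field_simp

lemma sin_add_arctan_div (θ x : ℝ) {d : ℝ} (hd : 0 < d) :
    sin (θ + arctan (x / d)) = (d * sin θ + x * cos θ) / √(d ^ 2 + x ^ 2) := by
  have hsqrt : √(1 + (x / d) ^ 2) = √(d ^ 2 + x ^ 2) / d := by
    rw [div_pow, one_add_div (by positivity), sqrt_div' _ (by positivity), sqrt_sq hd.le]
  rw [sin_add, sin_arctan, cos_arctan, hsqrt]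
  have : 0 < √(d ^ 2 + x ^ 2) := sqrt_pos.mpr (by positivity)
  field_simp

noncomputable def chordSq (c θ : ℝ) : ℝ := c ^ 2 + 4 * (1 - c) * sin θ ^ 2

lemma chordSq_eq_cos_sq_add_sin_sq (c θ : ℝ) :
    chordSq c θ = c ^ 2 * cos θ ^ 2 + (2 - c) ^ 2 * sin θ ^ 2 := by
  rw [chordSq]; linear_combination (-c ^ 2) * sin_sq_add_cos_sq θ

lemma chordSq_pos {c : ℝ} (hc0 : c ≠ 0) (hc2 : c ≠ 2) (θ : ℝ) : 0 < chordSq c θ := by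
  rw [chordSq_eq_cos_sq_add_sin_sq]
  rcases eq_or_ne (sin θ) 0 with hs | hs
  · have : cos θ ^ 2 = 1 := by nlinarith [sin_sq_add_cos_sq θ]
    simp [hs, this, sq_pos_of_ne_zero hc0]
  · have : 0 < (2 - c) ^ 2 * sin θ ^ 2 := by
      have : 2 - c ≠ 0 := sub_ne_zero.mpr (Ne.symm hc2)
      positivity
    positivity

lemma continuous_chordSq (c : ℝ) : Continuous (chordSq c) := by
  unfold chordSq; fun_prop

lemma chordSq_neg (c θ : ℝ) : chordSq c (-θ) = chordSq c θ := by
  simp [chordSq]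

lemma chordSq_eq_sq_add_sq (c θ : ℝ) :
    chordSq c θ = (1 - (1 - c) * cos (2 * θ)) ^ 2 + ((1 - c) * sin (2 * θ)) ^ 2 := by
  rw [chordSq]
  linear_combination (-(1 - c) ^ 2) * sin_sq_add_cos_sq (2 * θ) + 2 * (1 - c) * cos_two_mul θ
    + 4 * (1 - c) * sin_sq_add_cos_sq θ

lemma norm_one_sub_sub_exp_sq (c θ : ℝ) :
    ‖(1 : ℂ) - c - Complex.exp (Complex.I * ↑(2 * θ))‖ ^ 2 = chordSq c θ := by
  have hsplit : (1 : ℂ) - c - Complex.exp (Complex.I * ↑(2 * θ))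
      = ↑(1 - c - cos (2 * θ)) + ↑(-sin (2 * θ)) * Complex.I := by
    rw [mul_comm, Complex.exp_mul_I]; push_cast; ring
  rw [hsplit, Complex.sq_norm, Complex.normSq_add_mul_I, chordSq]
  linear_combination sin_sq_add_cos_sq (2 * θ) - 2 * (1 - c) * cos_two_mul θ
    - 4 * (1 - c) * sin_sq_add_cos_sq θ

lemma norm_div_norm_sq_eq (a b θ : ℝ) :
    ‖(1 : ℂ) - a - Complex.exp (Complex.I * ↑(2 * θ))‖ /
        ‖(1 : ℂ) - b - Complex.exp (Complex.I * ↑(2 * θ))‖ ^ 2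
      = √(chordSq a θ) / chordSq b θ := by
  rw [← norm_one_sub_sub_exp_sq, ← norm_one_sub_sub_exp_sq, sqrt_sq (norm_nonneg _)]

lemma integral_norm_div_norm_sq_eq {b : ℝ} (a : ℝ) (hb0 : b ≠ 0) (hb2 : b ≠ 2) :
    ∫ ω in -π..π, ‖(1 : ℂ) - a - Complex.exp (Complex.I * ω)‖ /
        ‖(1 : ℂ) - b - Complex.exp (Complex.I * ω)‖ ^ 2
      = 4 * ∫ θ in 0..π / 2, √(chordSq a θ) / chordSq b θ := by
  have hcont : Continuous fun θ => √(chordSq a θ) / chordSq b θ :=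
    (continuous_chordSq a).sqrt.div (continuous_chordSq b) fun θ => (chordSq_pos hb0 hb2 θ).ne'
  have heven : Function.Even fun θ => √(chordSq a θ) / chordSq b θ := fun θ => by
    simp only [chordSq_neg]
  have hsub := intervalIntegral.smul_integral_comp_mul_left
    (fun ω : ℝ => ‖(1 : ℂ) - a - Complex.exp (Complex.I * ω)‖ /
      ‖(1 : ℂ) - b - Complex.exp (Complex.I * ω)‖ ^ 2) 2 (a := -(π / 2)) (b := π / 2)
  rw [show 2 * -(π / 2) = -π by ring, show 2 * (π / 2) = π by ring] at hsub
  simp only [norm_div_norm_sq_eq] at hsub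
  rw [← hsub, heven.intervalIntegral_eq_two_mul (by positivity) (hcont.intervalIntegrable _ _),
    smul_eq_mul]
  ring

lemma one_sub_mul_sin_sq_pos {t : ℝ} (ht : t < 1) (φ : ℝ) : 0 < 1 - t * sin φ ^ 2 := by
  rcases le_or_gt t 0 with h | h
  · nlinarith [sq_nonneg (sin φ)]
  · nlinarith [sin_sq_le_one φ]

lemma continuous_ellipticPi_integrand {alphaSq k : ℝ} (hα : alphaSq < 1) (hk : k ^ 2 < 1) :
    Continuous fun θ => 1 / ((1 - alphaSq * sin θ ^ 2) * √(1 - k ^ 2 * sin θ ^ 2)) := by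
  refine continuous_const.div (by fun_prop) fun θ => ?_
  exact (mul_pos (one_sub_mul_sin_sq_pos hα θ) (sqrt_pos.mpr (one_sub_mul_sin_sq_pos hk θ))).ne'

lemma ellipticPi_eq_intervalIntegral (alphaSq k : ℝ) :
    ellipticPi alphaSq k
      = ∫ θ in 0..π / 2, 1 / ((1 - alphaSq * sin θ ^ 2) * √(1 - k ^ 2 * sin θ ^ 2)) := by
  rw [ellipticPi, integral_Icc_eq_integral_Ioc, intervalIntegral.integral_of_le (by positivity)]

/-- The continuous branch of `arctan ((2 - c) / c * tan θ)` vanishing at `0`. -/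
noncomputable def amplitude (c θ : ℝ) : ℝ :=
  θ + arctan ((1 - c) * sin (2 * θ) / (1 - (1 - c) * cos (2 * θ)))

lemma amplitude_zero (c : ℝ) : amplitude c 0 = 0 := by
  simp [amplitude]

lemma amplitude_pi_div_two (c : ℝ) : amplitude c (π / 2) = π / 2 := by
  simp [amplitude, show 2 * (π / 2) = π by ring]

section amplitude

variable {c : ℝ} (hc0 : 0 < c) (hc2 : c < 2)
include hc0 hc2

lemma one_sub_mul_cos_pos (θ : ℝ) : 0 < 1 - (1 - c) * cos (2 * θ) := by
  have hle := cos_le_one (2 * θ)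
  have hge := neg_one_le_cos (2 * θ)
  nlinarith [mul_nonneg hc0.le (by linarith : 0 ≤ 1 + cos (2 * θ)),
    mul_nonneg (by linarith : 0 ≤ 2 - c) (by linarith : 0 ≤ 1 - cos (2 * θ))]

lemma hasDerivAt_amplitude (θ : ℝ) :
    HasDerivAt (amplitude c) (c * (2 - c) / chordSq c θ) θ := by
  have hd := one_sub_mul_cos_pos hc0 hc2 θ
  have h2 := (hasDerivAt_id' θ).const_mul 2
  have hnum := h2.sin.const_mul (1 - c)
  have hden := (h2.cos.const_mul (1 - c)).const_sub 1
  refine ((hasDerivAt_id' θ).add (hnum.arctan_div hden hd.ne')).congr_deriv ?_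
  rw [chordSq_eq_sq_add_sq]
  field_simp
  linear_combination (-(1 - c) ^ 2) * sin_sq_add_cos_sq (2 * θ)

lemma sin_amplitude (θ : ℝ) :
    sin (amplitude c θ) = (2 - c) * sin θ / √(chordSq c θ) := by
  rw [amplitude, sin_add_arctan_div _ _ (one_sub_mul_cos_pos hc0 hc2 θ), ← chordSq_eq_sq_add_sq,
    sin_two_mul, cos_two_mul]
  ring

lemma one_sub_mul_sin_amplitude_sq {b : ℝ} (hb : b ≠ 0) (θ : ℝ) :
    1 - (b ^ 2 * (1 - c) - c ^ 2 * (1 - b)) / (b ^ 2 * (1 - c / 2) ^ 2) * sin (amplitude c θ) ^ 2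
      = c ^ 2 * chordSq b θ / (b ^ 2 * chordSq c θ) := by
  have hq := chordSq_pos hc0.ne' hc2.ne θ
  have : 2 - c ≠ 0 := by linarith
  rw [sin_amplitude hc0 hc2, div_pow, mul_pow, sq_sqrt hq.le]
  field_simp
  simp only [chordSq]
  ring

lemma sqrt_one_sub_mul_sin_amplitude_sq (hc1 : c ≤ 1) (θ : ℝ) :
    √(1 - (√(1 - c) / (1 - c / 2)) ^ 2 * sin (amplitude c θ) ^ 2) = c / √(chordSq c θ) := by
  have hq := chordSq_pos hc0.ne' hc2.ne θ
  have : 2 - c ≠ 0 := by linarith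
  have hsq : 1 - (√(1 - c) / (1 - c / 2)) ^ 2 * sin (amplitude c θ) ^ 2
      = (c / √(chordSq c θ)) ^ 2 := by
    rw [sin_amplitude hc0 hc2, div_pow, div_pow, div_pow, mul_pow, sq_sqrt (by linarith),
      sq_sqrt hq.le]
    field_simp
    simp only [chordSq]
    ring
  rw [hsq, sqrt_sq (by positivity)]

lemma ellipticPi_eq_integral {b : ℝ} (hc1 : c ≤ 1) (hb0 : b ≠ 0) (hb2 : b ≠ 2) :
    ellipticPi ((b ^ 2 * (1 - c) - c ^ 2 * (1 - b)) / (b ^ 2 * (1 - c / 2) ^ 2))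
        (√(1 - c) / (1 - c / 2))
      = (2 - c) * b ^ 2 / c ^ 2 * ∫ θ in 0..π / 2, √(chordSq c θ) / chordSq b θ := by
  have hc : 0 < 1 - c / 2 := by linarith
  have hα : (b ^ 2 * (1 - c) - c ^ 2 * (1 - b)) / (b ^ 2 * (1 - c / 2) ^ 2) < 1 := by
    rw [div_lt_one (by positivity)]
    nlinarith [sq_pos_of_ne_zero (sub_ne_zero.mpr hb2), sq_pos_of_pos hc0]
  have hk : (√(1 - c) / (1 - c / 2)) ^ 2 < 1 := by
    rw [div_pow, sq_sqrt (by linarith), div_lt_one (by positivity)]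
    nlinarith
  have hsubst := intervalIntegral.integral_comp_mul_deriv (a := 0) (b := π / 2)
    (fun θ _ => hasDerivAt_amplitude hc0 hc2 θ)
    ((continuous_const.div (continuous_chordSq c)
      fun θ => (chordSq_pos hc0.ne' hc2.ne θ).ne').continuousOn)
    (continuous_ellipticPi_integrand hα hk)
  rw [amplitude_zero, amplitude_pi_div_two] at hsubst
  rw [ellipticPi_eq_intervalIntegral, ← hsubst, ← intervalIntegral.integral_const_mul]
  refine intervalIntegral.integral_congr fun θ _ => ?_
  have hqc := chordSq_pos hc0.ne' hc2.ne θ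
  have : 0 < √(chordSq c θ) := sqrt_pos.mpr hqc
  simp only [Function.comp_apply]
  rw [sqrt_one_sub_mul_sin_amplitude_sq hc0 hc2 hc1, one_sub_mul_sin_amplitude_sq hc0 hc2 hb0]
  field_simp

end amplitude

theorem integral_ratio_eq_ellipticPi (a b : ℝ) (ha0 : 0 < a) (ha1 : a < 1)
    (hb0 : 0 < b) (hb1 : b < 1) :
    (∫ ω in Set.Icc (-π) π,
        ‖(1 : ℂ) - (a : ℂ) - Complex.exp (Complex.I * (ω : ℂ))‖ /
          ‖(1 : ℂ) - (b : ℂ) - Complex.exp (Complex.I * (ω : ℂ))‖ ^ 2)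
      = (2 * a ^ 2 / (b ^ 2 * (1 - a / 2))) *
        ellipticPi ((b ^ 2 * (1 - a) - a ^ 2 * (1 - b)) / (b ^ 2 * (1 - a / 2) ^ 2))
          (Real.sqrt (1 - a) / (1 - a / 2)) := by
  have hb2 : b ≠ 2 := by linarith
  rw [integral_Icc_eq_integral_Ioc, ← intervalIntegral.integral_of_le (by linarith [pi_pos]),
    integral_norm_div_norm_sq_eq a hb0.ne' hb2,
    ellipticPi_eq_integral ha0 (by linarith) ha1.le hb0.ne' hb2]
  have : 2 - a ≠ 0 := by linarith
  field_simp
  ring
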